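/- Fix ρ_p > 0, h > 0, and a point X_T ∈ ℝ². For each integer n ≥ 2 let R_n = √(n/(π ρ_p)), let X_1, …, X_n be i.i.d. random points uniformly distributed on the closed disk of radius R_n centered at the origin in ℝ², and let M_1, …, M_n be i.i.d. random variables uniformly distributed on [0,1], independent of the positions. Define P_1 = 1 if and only if |X_1 − X_T| ≥ h and M_1 < M_j for every j ≠ 1 with |X_1 − X_j| < h, and P_1 = 0 otherwise. Then lim_{n→∞} Pr(P_1 = 1) = (1 − exp(−π ρ_p h²)) / (π ρ_p h²). -/

import Mathlib

open MeasureTheory ProbabilityTheory Set Real Filter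

/-- The uniform probability measure on the closed disk of radius `R` centered at the
origin of the plane. -/
noncomputable def unifDisk (R : ℝ) : Measure (EuclideanSpace ℝ (Fin 2)) :=
  (volume (Metric.closedBall (0 : EuclideanSpace ℝ (Fin 2)) R))⁻¹ •
    volume.restrict (Metric.closedBall (0 : EuclideanSpace ℝ (Fin 2)) R)

/-- The uniform probability measure on `[0,1]`. -/
noncomputable def unifUnit : Measure ℝ := volume.restrict (Set.Icc (0:ℝ) 1)

/-!
Conditioning on the representative marked point `z = (x, m)` and using independence, it is
retained with probability `∫ 1{|x - X_T| ≥ h} (1 - |B(x, h) ∩ D_R| / |D_R| · m)^(n-1)`.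
Rescaling `D_R` to the unit disk, for almost every `(x, m)` the ball `B(x, h)` eventually lies
inside `D_R` and away from `X_T`, so the integrand equals `(1 - π ρ_p h² m / n)^(n-1)`, which
tends to `exp(-π ρ_p h² m)`. Dominated convergence leaves `∫₀¹ exp(-π ρ_p h² m) dm`.
-/

open Metric
open scoped ENNReal Topology

local notation "ℝ²" => EuclideanSpace ℝ (Fin 2)

instance : IsProbabilityMeasure unifUnit := ⟨by simp [unifUnit]⟩

lemma unifUnit_Iic {t : ℝ} (ht : t ∈ Icc (0 : ℝ) 1) :
    unifUnit (Iic t) = ENNReal.ofReal t := by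
  have : Iic t ∩ Icc 0 1 = Icc 0 t := by
    ext y
    simp only [mem_inter_iff, mem_Iic, mem_Icc]
    exact ⟨fun h => ⟨h.2.1, h.1⟩, fun h => ⟨h.2, h.1, h.2.trans ht.2⟩⟩
  rw [unifUnit, Measure.restrict_apply measurableSet_Iic, this, Real.volume_Icc, sub_zero]

lemma unifDisk_eq_cond (R : ℝ) : unifDisk R = volume[|closedBall (0 : ℝ²) R] := rfl

lemma isProbabilityMeasure_unifDisk {R : ℝ} (hR : 0 < R) : IsProbabilityMeasure (unifDisk R) :=
  cond_isProbabilityMeasure_of_finite (measure_closedBall_pos volume 0 hR).ne'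
    measure_closedBall_lt_top.ne

lemma unifDisk_ball {R r : ℝ} {x : ℝ²} (hR : 0 < R) (hr : 0 ≤ r)
    (hsub : ball x r ⊆ closedBall 0 R) :
    unifDisk R (ball x r) = ENNReal.ofReal (r ^ 2 / R ^ 2) := by
  have hV : volume (ball (0 : ℝ²) 1) ≠ 0 := (measure_ball_pos volume _ one_pos).ne'
  rw [unifDisk_eq_cond, cond_apply measurableSet_closedBall, inter_eq_right.2 hsub,
    ← ENNReal.div_eq_inv_mul, Measure.addHaar_ball volume x hr,
    Measure.addHaar_closedBall volume 0 hR.le, finrank_euclideanSpace_fin,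
    ENNReal.mul_div_mul_right _ _ hV measure_ball_lt_top.ne,
    ENNReal.ofReal_div_of_pos (by positivity)]

lemma map_smul_unifDisk_one {R : ℝ} (hR : 0 < R) : (unifDisk 1).map (R • ·) = unifDisk R := by
  have hf : Measurable (R • · : ℝ² → ℝ²) := measurable_const_smul R
  have hball : (R • · : ℝ² → ℝ²) ⁻¹' closedBall 0 R = closedBall 0 1 := by
    rw [preimage_smul₀ hR.ne', smul_closedBall _ _ hR.le, smul_zero, norm_inv,
      Real.norm_of_nonneg hR.le, inv_mul_cancel₀ hR.ne']
  have hvol : ∀ s, MeasurableSet s → volume ((R • · : ℝ² → ℝ²) ⁻¹' s) =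
      ENNReal.ofReal |R ^ 2|⁻¹ * volume s := fun s hs => by
    rw [← abs_inv, ← Measure.map_apply hf hs, Measure.map_addHaar_smul volume hR.ne',
      finrank_euclideanSpace_fin, Measure.smul_apply, smul_eq_mul]
  ext s hs
  have hc : ENNReal.ofReal |R ^ 2|⁻¹ ≠ 0 := by simp [hR.ne']
  rw [Measure.map_apply hf hs, unifDisk_eq_cond, unifDisk_eq_cond,
    cond_apply measurableSet_closedBall, cond_apply measurableSet_closedBall, ← hball,
    ← preimage_inter, hvol _ (measurableSet_closedBall.inter hs), hvol _ measurableSet_closedBall,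
    ← ENNReal.div_eq_inv_mul, ← ENNReal.div_eq_inv_mul,
    ENNReal.mul_div_mul_left _ _ hc ENNReal.ofReal_ne_top]

lemma ae_unifDisk (R : ℝ) : ∀ᵐ x ∂unifDisk R, ‖x‖ < R ∧ x ≠ 0 := by
  have hsphere : ∀ᵐ x ∂(volume : Measure ℝ²), x ∉ sphere 0 R :=
    measure_eq_zero_iff_ae_notMem.1 (Measure.addHaar_sphere volume 0 R)
  have hzero : ∀ᵐ x ∂(volume : Measure ℝ²), x ≠ 0 :=
    measure_eq_zero_iff_ae_notMem.1 (measure_singleton 0)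
  rw [unifDisk_eq_cond]
  filter_upwards [ae_cond_mem measurableSet_closedBall, cond_absolutelyContinuous.ae_le hsphere,
    cond_absolutelyContinuous.ae_le hzero] with x hball hsph hx0
  rw [mem_closedBall_zero_iff] at hball
  rw [mem_sphere_zero_iff_norm] at hsph
  exact ⟨hball.lt_of_ne hsph, hx0⟩

section Iid

variable {α Ω : Type*} [MeasurableSpace α] [MeasurableSpace Ω] {n : ℕ} {A : Set α}
  {S : Set (α × α)}

lemma measurableSet_zero_mem_and_forall_rel (hA : MeasurableSet A) (hS : MeasurableSet S) :
    MeasurableSet {y : Fin (n + 1) → α | y 0 ∈ A ∧ ∀ j, j ≠ 0 → (y 0, y j) ∈ S} := by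
  rw [ofPred_and, ofPred_forall]
  refine (measurable_pi_apply 0 hA).inter (MeasurableSet.iInter fun j => ?_)
  exact (MeasurableSet.const (j ≠ 0)).himp
    ((measurable_pi_apply 0).prodMk (measurable_pi_apply j) hS)

lemma pi_zero_mem_and_forall_rel (ν : Measure α) [SigmaFinite ν] (hA : MeasurableSet A)
    (hS : MeasurableSet S) :
    Measure.pi (fun _ : Fin (n + 1) => ν) {y | y 0 ∈ A ∧ ∀ j, j ≠ 0 → (y 0, y j) ∈ S} =
      ∫⁻ z in A, ν (Prod.mk z ⁻¹' S) ^ n ∂ν := by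
  set T : Set (α × (Fin n → α)) := {p | p.1 ∈ A ∧ ∀ j, (p.1, p.2 j) ∈ S}
  have hT : MeasurableSet T := by
    simp only [T, ofPred_and, ofPred_forall]
    exact (measurable_fst hA).inter <| MeasurableSet.iInter fun j =>
      measurable_fst.prodMk ((measurable_pi_apply j).comp measurable_snd) hS
  have hpre : MeasurableEquiv.piFinSuccAbove (fun _ => α) 0 ⁻¹' T =
      {y | y 0 ∈ A ∧ ∀ j, j ≠ 0 → (y 0, y j) ∈ S} := by
    ext y
    simp [T, MeasurableEquiv.piFinSuccAbove_apply, Fin.forall_fin_succ, Fin.tail]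
  rw [← hpre, (measurePreserving_piFinSuccAbove (fun _ => ν) 0).measure_preimage
    hT.nullMeasurableSet, Measure.prod_apply hT, ← lintegral_indicator hA]
  congr 1 with z
  by_cases hz : z ∈ A
  · have : Prod.mk z ⁻¹' T = univ.pi fun _ => Prod.mk z ⁻¹' S := by ext; simp [T, hz]
    simp [this, hz, Measure.pi_pi]
  · have : Prod.mk z ⁻¹' T = ∅ := by ext; simp [T, hz]
    simp [this, hz]

lemma ProbabilityTheory.iIndepFun.measure_zero_mem_and_forall_rel {P : Measure Ω} {ν : Measure α}
    {f : Fin (n + 1) → Ω → α} (hf : ∀ i, AEMeasurable (f i) P) (hind : iIndepFun f P)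
    (hlaw : ∀ i, P.map (f i) = ν) (hA : MeasurableSet A) (hS : MeasurableSet S) :
    P {ω | f 0 ω ∈ A ∧ ∀ j, j ≠ 0 → (f 0 ω, f j ω) ∈ S} =
      ∫⁻ z in A, ν (Prod.mk z ⁻¹' S) ^ n ∂ν := by
  have := hind.isProbabilityMeasure
  have : IsProbabilityMeasure ν := hlaw 0 ▸ Measure.isProbabilityMeasure_map (hf 0)
  have hjoint : P.map (fun ω i => f i ω) = Measure.pi fun _ => ν := by
    simpa only [hlaw] using hind.map_fun_eq_pi_map hf
  rw [← pi_zero_mem_and_forall_rel ν hA hS, ← hjoint, Measure.map_apply_of_aemeasurable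
    (aemeasurable_pi_lambda _ hf) (measurableSet_zero_mem_and_forall_rel hA hS)]
  rfl

end Iid

noncomputable abbrev markedPointLaw (R : ℝ) : Measure (ℝ² × ℝ) := (unifDisk R).prod unifUnit

/-- Matérn type-II rule: `(z, u) ∈ survivesAgainst h` iff the marked point `u = (position, mark)`
does not delete `z`. -/
def survivesAgainst (h : ℝ) : Set ((ℝ² × ℝ) × (ℝ² × ℝ)) :=
  {p | dist p.1.1 p.2.1 < h → p.1.2 < p.2.2}

lemma measurableSet_survivesAgainst (h : ℝ) : MeasurableSet (survivesAgainst h) :=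
  (measurableSet_lt (measurable_fst.fst.dist measurable_snd.fst) measurable_const).himp
    (measurableSet_lt measurable_fst.snd measurable_snd.snd)

lemma markedPointLaw_preimage_survivesAgainst {R : ℝ} (hR : 0 < R) (h : ℝ) (z : ℝ² × ℝ) :
    markedPointLaw R (Prod.mk z ⁻¹' survivesAgainst h) =
      1 - unifDisk R (ball z.1 h) * unifUnit (Iic z.2) := by
  have := isProbabilityMeasure_unifDisk hR
  have hcompl : Prod.mk z ⁻¹' survivesAgainst h = (ball z.1 h ×ˢ Iic z.2)ᶜ := by
    ext u
    simp only [survivesAgainst, mem_preimage, mem_ofPred_eq, mem_compl_iff, mem_prod, mem_ball,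
      mem_Iic, dist_comm u.1, not_and, not_le]
  rw [hcompl, prob_compl_eq_one_sub (measurableSet_ball.prod measurableSet_Iic), Measure.prod_prod]

lemma tendsto_one_sub_div_pow (x : ℝ) :
    Tendsto (fun n : ℕ => (1 - x / (n + 1)) ^ n) atTop (𝓝 (exp (-x))) := by
  refine (Real.tendsto_one_add_pow_exp_of_tendsto (g := fun n : ℕ => -x / (n + 1)) ?_).congr
    fun n => by ring
  have := (tendsto_natCast_div_add_atTop (1 : ℝ)).const_mul (-x)
  rw [mul_one] at this
  exact this.congr fun n => by ring

lemma lintegral_exp_neg_mul_unifUnit {c : ℝ} (hc : 0 < c) :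
    ∫⁻ t, ENNReal.ofReal (exp (-(c * t))) ∂unifUnit =
      ENNReal.ofReal ((1 - exp (-c)) / c) := by
  rw [unifUnit, ← ofReal_integral_eq_lintegral_ofReal
    ((by fun_prop : Continuous fun t => exp (-(c * t))).integrableOn_Icc)
    (ae_of_all _ fun t => (exp_pos _).le), integral_Icc_eq_integral_Ioc,
    ← intervalIntegral.integral_of_le zero_le_one]
  simp_rw [← neg_mul]
  rw [intervalIntegral.integral_comp_mul_left _ (neg_ne_zero.2 hc.ne'), integral_exp]
  congr 1
  rw [mul_zero, mul_one, exp_zero, smul_eq_mul]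
  field_simp
  ring

lemma lintegral_markedPointLaw_eq_rescaled {R : ℝ} (hR : 0 < R) {F : ℝ² × ℝ → ℝ≥0∞}
    (hF : Measurable F) :
    ∫⁻ z, F z ∂markedPointLaw R = ∫⁻ w, F (R • w.1, w.2) ∂markedPointLaw 1 := by
  unfold markedPointLaw
  have := isProbabilityMeasure_unifDisk one_pos
  have hmap := Measure.map_prod_map (unifDisk 1) unifUnit (measurable_const_smul R) measurable_id
  rw [map_smul_unifDisk_one hR, Measure.map_id] at hmap
  rw [hmap, lintegral_map hF ((measurable_const_smul R).prodMap measurable_id)]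
  rfl

section Geometry

variable {E : Type*} [NormedAddCommGroup E] [NormedSpace ℝ E] {ι : Type*} {l : Filter ι}
  {R : ι → ℝ}

lemma eventually_le_dist_smul (hR : Tendsto R l atTop) {u : E} (hu : u ≠ 0) (x : E) (h : ℝ) :
    ∀ᶠ i in l, h ≤ dist (R i • u) x := by
  filter_upwards [(hR.atTop_mul_const (norm_pos_iff.2 hu)).eventually_ge_atTop (h + ‖x‖),
    hR.eventually_ge_atTop 0] with i hi hRi
  calc h ≤ ‖R i • u‖ - ‖x‖ := by
        rw [norm_smul, Real.norm_of_nonneg hRi]; linarith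
    _ ≤ dist (R i • u) x := by rw [dist_eq_norm]; exact norm_sub_norm_le _ _

lemma eventually_ball_smul_subset_closedBall (hR : Tendsto R l atTop) {u : E} (hu : ‖u‖ < 1)
    (h : ℝ) : ∀ᶠ i in l, ball (R i • u) h ⊆ closedBall 0 (R i) := by
  filter_upwards [(hR.atTop_mul_const (sub_pos.2 hu)).eventually_ge_atTop h,
    hR.eventually_ge_atTop 0] with i hi hRi
  refine ball_subset_closedBall.trans (closedBall_subset_closedBall' ?_)
  rw [dist_zero_right, norm_smul, Real.norm_of_nonneg hRi]
  linarith

end Geometry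

lemma tendsto_radius {ρp : ℝ} (hρp : 0 < ρp) {R : ℕ → ℝ}
    (hR : ∀ n : ℕ, R n = √(n / (π * ρp))) : Tendsto R atTop atTop :=
  (tendsto_sqrt_atTop.comp (tendsto_natCast_atTop_atTop.atTop_div_const (by positivity))).congr
    fun n => (hR n).symm

lemma tendsto_indicator_survival_smul {ρp h : ℝ} (hρp : 0 < ρp) (hh : 0 < h) (XT : ℝ²)
    {R : ℕ → ℝ} (hR : ∀ n : ℕ, R n = √(n / (π * ρp))) {u : ℝ²} (hu : ‖u‖ < 1 ∧ u ≠ 0)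
    {t : ℝ} (ht : t ∈ Icc (0 : ℝ) 1) :
    Tendsto (fun n : ℕ => {z : ℝ² × ℝ | h ≤ dist z.1 XT}.indicator
        (fun z => markedPointLaw (R (n + 2)) (Prod.mk z ⁻¹' survivesAgainst h) ^ (n + 1))
        (R (n + 2) • u, t))
      atTop (𝓝 (ENNReal.ofReal (exp (-(π * ρp * h ^ 2 * t))))) := by
  set c := π * ρp * h ^ 2
  have hRtop : Tendsto (fun n => R (n + 2)) atTop atTop :=
    (tendsto_radius hρp hR).comp (tendsto_add_atTop_nat 2)
  have hRpos : ∀ n, 0 < R (n + 2) := fun n => by rw [hR]; positivity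
  have hratio : ∀ n : ℕ, h ^ 2 / R (n + 2) ^ 2 = c / (n + 2) := fun n => by
    rw [hR, sq_sqrt (by positivity)]
    field_simp
    push_cast
    ring
  refine (ENNReal.tendsto_ofReal ((tendsto_one_sub_div_pow (c * t)).comp
    (tendsto_add_atTop_nat 1))).congr' ?_
  filter_upwards [eventually_le_dist_smul hRtop hu.2 XT h,
    eventually_ball_smul_subset_closedBall hRtop hu.1 h, hRtop.eventually_ge_atTop h]
    with n hdist hball hhR
  have hq : h ^ 2 / R (n + 2) ^ 2 * t ≤ 1 :=
    mul_le_one₀ (div_le_one_of_le₀ (pow_le_pow_left₀ hh.le hhR 2) (by positivity)) ht.1 ht.2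
  have hmem : (R (n + 2) • u, t) ∈ {z : ℝ² × ℝ | h ≤ dist z.1 XT} := hdist
  symm
  rw [Function.comp_apply, indicator_of_mem hmem,
    markedPointLaw_preimage_survivesAgainst (hRpos n), unifDisk_ball (hRpos n) hh.le hball,
    unifUnit_Iic ht, ← ENNReal.ofReal_mul (by positivity),
    ← ENNReal.ofReal_one, ← ENNReal.ofReal_sub _ (mul_nonneg (by positivity) ht.1),
    ← ENNReal.ofReal_pow (by linarith), hratio n]
  congr 2
  push_cast
  ring

lemma tendsto_lintegral_survival {ρp h : ℝ} (hρp : 0 < ρp) (hh : 0 < h) (XT : ℝ²)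
    {R : ℕ → ℝ} (hR : ∀ n : ℕ, R n = √(n / (π * ρp))) :
    Tendsto (fun n : ℕ => ∫⁻ z in {z : ℝ² × ℝ | h ≤ dist z.1 XT},
        markedPointLaw (R (n + 2)) (Prod.mk z ⁻¹' survivesAgainst h) ^ (n + 1)
          ∂markedPointLaw (R (n + 2)))
      atTop (𝓝 (ENNReal.ofReal ((1 - exp (-(π * ρp * h ^ 2))) / (π * ρp * h ^ 2)))) := by
  set A := {z : ℝ² × ℝ | h ≤ dist z.1 XT}
  have hA : MeasurableSet A :=
    measurableSet_le measurable_const (measurable_fst.dist measurable_const)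
  have hRpos : ∀ n, 0 < R (n + 2) := fun n => by rw [hR]; positivity
  have := isProbabilityMeasure_unifDisk one_pos
  set F : ℕ → ℝ² × ℝ → ℝ≥0∞ := fun n => A.indicator fun z =>
    markedPointLaw (R (n + 2)) (Prod.mk z ⁻¹' survivesAgainst h) ^ (n + 1)
  have hF : ∀ n, Measurable (F n) := fun n => by
    have := isProbabilityMeasure_unifDisk (hRpos n)
    exact (Measurable.pow_const
      (measurable_measure_prodMk_left (measurableSet_survivesAgainst h)) _).indicator hA
  have hF_le : ∀ n z, F n z ≤ 1 := fun n => by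
    have := isProbabilityMeasure_unifDisk (hRpos n)
    exact indicator_le fun z _ => pow_le_one' prob_le_one _
  have hrescale : ∀ n, ∫⁻ w, F n (R (n + 2) • w.1, w.2) ∂markedPointLaw 1 =
      ∫⁻ z in A, markedPointLaw (R (n + 2)) (Prod.mk z ⁻¹' survivesAgainst h) ^ (n + 1)
        ∂markedPointLaw (R (n + 2)) := fun n => by
    rw [← lintegral_indicator hA, lintegral_markedPointLaw_eq_rescaled (hRpos n) (hF n)]
  have hlimit : ∫⁻ w, ENNReal.ofReal (exp (-(π * ρp * h ^ 2 * w.2))) ∂markedPointLaw 1 =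
      ENNReal.ofReal ((1 - exp (-(π * ρp * h ^ 2))) / (π * ρp * h ^ 2)) := by
    rw [lintegral_prod _ (by fun_prop)]
    simp only [lintegral_exp_neg_mul_unifUnit (by positivity : 0 < π * ρp * h ^ 2),
      lintegral_const, measure_univ, mul_one]
  rw [← hlimit]
  refine (tendsto_lintegral_of_dominated_convergence (fun _ => 1)
    (fun n => (hF n).comp ((measurable_const_smul _).prodMap measurable_id))
    (fun n => ae_of_all _ fun w => hF_le n _) (by simp) ?_).congr hrescale
  filter_upwards [Measure.quasiMeasurePreserving_fst.ae (ae_unifDisk 1),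
    Measure.quasiMeasurePreserving_snd.ae (ae_restrict_mem measurableSet_Icc)] with w hw1 hw2
  exact tendsto_indicator_survival_smul hρp hh XT hR hw1 hw2

theorem stmt10_general (ρp h : ℝ) (hρp : 0 < ρp) (hh : 0 < h)
    (XT : EuclideanSpace ℝ (Fin 2))
    (R : ℕ → ℝ) (hR : ∀ n : ℕ, R n = Real.sqrt (n / (π * ρp)))
    (Ω : ℕ → Type) [∀ n, MeasurableSpace (Ω n)]
    (P : (n : ℕ) → Measure (Ω n))
    (X : (n : ℕ) → Fin n → Ω n → EuclideanSpace ℝ (Fin 2))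
    (M : (n : ℕ) → Fin n → Ω n → ℝ)
    (hmeasX : ∀ n i, Measurable (X n i)) (hmeasM : ∀ n i, Measurable (M n i))
    (hindep : ∀ n, iIndepFun
      (fun i : Fin n => fun ω => (X n i ω, M n i ω)) (P n))
    (hlaw : ∀ n (i : Fin n), (P n).map (fun ω => (X n i ω, M n i ω)) =
      (unifDisk (R n)).prod unifUnit) :
    Tendsto
      (fun n : ℕ =>
        ((P (n + 2)) {ω | h ≤ dist (X (n + 2) 0 ω) XT ∧
          ∀ j : Fin (n + 2), j ≠ 0 →
            dist (X (n + 2) 0 ω) (X (n + 2) j ω) < h → M (n + 2) 0 ω < M (n + 2) j ω}).toReal)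
      atTop (nhds ((1 - Real.exp (-(π * ρp * h ^ 2))) / (π * ρp * h ^ 2))) := by
  have hA : MeasurableSet {z : ℝ² × ℝ | h ≤ dist z.1 XT} :=
    measurableSet_le measurable_const (measurable_fst.dist measurable_const)
  have hlimit_nonneg : 0 ≤ (1 - exp (-(π * ρp * h ^ 2))) / (π * ρp * h ^ 2) :=
    div_nonneg (sub_nonneg.2 (exp_le_one_iff.2 (neg_nonpos.2 (by positivity)))) (by positivity)
  rw [← ENNReal.toReal_ofReal hlimit_nonneg]
  refine ((ENNReal.tendsto_toReal ENNReal.ofReal_ne_top).comp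
    (tendsto_lintegral_survival hρp hh XT hR)).congr fun n => ?_
  rw [Function.comp_apply, ← (hindep (n + 2)).measure_zero_mem_and_forall_rel
    (fun i => ((hmeasX _ i).prodMk (hmeasM _ i)).aemeasurable) (hlaw (n + 2)) hA
    (measurableSet_survivesAgainst h)]
  rfl

/-- HC-II marginal.  Fix `ρ_p > 0`, `h > 0`, `X_T ∈ ℝ²`.  For each
`n ≥ 2` let `R_n = √(n/(π ρ_p))`, let `X_1, …, X_n` be i.i.d. uniform on the closed disk
of radius `R_n`, and let `M_1, …, M_n` be i.i.d. uniform marks on `[0,1]` independent of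
the positions (i.e. the pairs `(X_i, M_i)` are i.i.d. with product law).  With `P_1 = 1`
iff `|X_1 − X_T| ≥ h` and `M_1 < M_j` for every `j ≠ 1` with `|X_1 − X_j| < h`, we have
`Pr(P_1 = 1) → (1 − exp(−π ρ_p h²))/(π ρ_p h²)`. -/
theorem stmt10 (ρp h : ℝ) (hρp : 0 < ρp) (hh : 0 < h)
    (XT : EuclideanSpace ℝ (Fin 2))
    (R : ℕ → ℝ) (hR : ∀ n : ℕ, R n = Real.sqrt (n / (π * ρp)))
    (Ω : ℕ → Type) [∀ n, MeasurableSpace (Ω n)]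
    (P : (n : ℕ) → Measure (Ω n)) (hprob : ∀ n, IsProbabilityMeasure (P n))
    (X : (n : ℕ) → Fin n → Ω n → EuclideanSpace ℝ (Fin 2))
    (M : (n : ℕ) → Fin n → Ω n → ℝ)
    (hmeasX : ∀ n i, Measurable (X n i)) (hmeasM : ∀ n i, Measurable (M n i))
    (hindep : ∀ n, iIndepFun
      (fun i : Fin n => fun ω => (X n i ω, M n i ω)) (P n))
    (hlaw : ∀ n (i : Fin n), (P n).map (fun ω => (X n i ω, M n i ω)) =
      (unifDisk (R n)).prod unifUnit) :
    Tendsto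
      (fun n : ℕ =>
        ((P (n + 2)) {ω | h ≤ dist (X (n + 2) 0 ω) XT ∧
          ∀ j : Fin (n + 2), j ≠ 0 →
            dist (X (n + 2) 0 ω) (X (n + 2) j ω) < h → M (n + 2) 0 ω < M (n + 2) j ω}).toReal)
      atTop (nhds ((1 - Real.exp (-(π * ρp * h ^ 2))) / (π * ρp * h ^ 2))) :=
  stmt10_general ρp h hρp hh XT R hR Ω P X M hmeasX hmeasM hindep hlaw
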